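/- arXiv:2604.00754 — 6 statements merged into one kernel-verified Lean document; each statement's English description precedes it below -/
import Mathlib

section
/- Let n ≥ 2 and h ≥ 0 be integers with w = 2h + 1 ≤ n. Let R ⊆ Fin n be a set of cardinality r and let k ∈ Fin n with k ∉ R. For σ drawn uniformly at random from the permutations of Fin n, the probability that |σ(j) − σ(k)|_n > h holds simultaneously for every j ∈ R is at most ((n − w)/(n − 1))^r. -/
/-- Circular distance on `Fin n`: `|i − j|_n = min(|i − j|, n − |i − j|)`. -/
def circDist (n : ℕ) (i j : Fin n) : ℕ :=
  min (max i.val j.val - min i.val j.val) (n - (max i.val j.val - min i.val j.val))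

open Finset Equiv


lemma circDist_comm (n : ℕ) (i j : Fin n) : circDist n i j = circDist n j i := by
  unfold circDist; rw [max_comm i.val j.val, min_comm i.val j.val]

lemma mod3 (t n : ℕ) (hn : 0 < n) (ht : t < 3*n) :
    (t < n ∧ t % n = t) ∨ (n ≤ t ∧ t < 2*n ∧ t % n + n = t) ∨
      (2*n ≤ t ∧ t % n + 2*n = t) := by
  rcases Nat.lt_or_ge t n with h1 | h1
  · exact Or.inl ⟨h1, Nat.mod_eq_of_lt h1⟩
  rw [Nat.mod_eq_sub_mod h1]
  rcases Nat.lt_or_ge (t - n) n with h2 | h2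
  · exact Or.inr (Or.inl ⟨h1, by omega, by rw [Nat.mod_eq_of_lt h2]; omega⟩)
  rw [Nat.mod_eq_sub_mod h2, Nat.mod_eq_of_lt (by omega)]
  exact Or.inr (Or.inr ⟨by omega, by omega⟩)

lemma card_window (n h : ℕ) (hwn : 2*h+1 ≤ n) (a : Fin n) :
    (Finset.univ.filter (fun b => circDist n a b ≤ h)).card = 2*h+1 := by
  have hn : 0 < n := by omega
  rw [← Finset.card_range (2*h+1)]
  symm
  apply Finset.card_bij (fun x _ => (⟨(a.val + x + (n - h)) % n, Nat.mod_lt _ hn⟩ : Fin n))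
  · intro x hx
    simp only [Finset.mem_range] at hx
    simp only [Finset.mem_filter, Finset.mem_univ, true_and]
    have ha := a.isLt
    have := mod3 (a.val + x + (n - h)) n hn (by omega)
    unfold circDist
    simp only [Fin.val_mk]
    omega
  · intro x hx y hy hxy
    simp only [Finset.mem_range] at hx hy
    have hv : (a.val + x + (n - h)) % n = (a.val + y + (n - h)) % n :=
      congrArg Fin.val hxy
    have ha := a.isLt
    have h1 := mod3 (a.val + x + (n - h)) n hn (by omega)
    have h2 := mod3 (a.val + y + (n - h)) n hn (by omega)
    omega
  · intro b hb
    simp only [Finset.mem_filter, Finset.mem_univ, true_and] at hb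
    unfold circDist at hb
    have ha := a.isLt
    have hblt := b.isLt
    have key : ∃ x m, x < 2*h+1 ∧ a.val + x + (n - h) = n * m + b.val := by
      rcases le_total a.val b.val with hab | hab
      · rcases le_or_gt (b.val - a.val) h with hd | hd
        · exact ⟨h + (b.val - a.val), 1, by omega, by omega⟩
        · exact ⟨h - (n - (b.val - a.val)), 0, by omega, by omega⟩
      · rcases le_or_gt (a.val - b.val) h with hd | hd
        · exact ⟨h - (a.val - b.val), 1, by omega, by omega⟩
        · exact ⟨h + (n - (a.val - b.val)), 2, by omega, by omega⟩
    obtain ⟨x, m, hx, he⟩ := key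
    refine ⟨x, Finset.mem_range.mpr hx, ?_⟩
    apply Fin.ext
    simp only [Fin.val_mk]
    rw [he, Nat.mul_add_mod, Nat.mod_eq_of_lt b.isLt]

lemma circDist_self (n : ℕ) (i : Fin n) : circDist n i i = 0 := by
  simp [circDist]

lemma step_eq (n h : ℕ) (hwn : 2*h+1 ≤ n) (k j₀ : Fin n) (R' : Finset (Fin n))
    (hkR : k ∉ R') (hjR : j₀ ∉ R') (hjk : j₀ ≠ k) :
    (univ.filter (fun σ : Equiv.Perm (Fin n) =>
        ∀ j ∈ insert j₀ R', h < circDist n (σ j) (σ k))).card * (n - 1 - R'.card)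
      = (univ.filter (fun σ : Equiv.Perm (Fin n) =>
        ∀ j ∈ R', h < circDist n (σ j) (σ k))).card * (n - (2*h+1) - R'.card) := by
  classical
  set GA := univ.filter (fun σ : Equiv.Perm (Fin n) =>
      ∀ j ∈ insert j₀ R', h < circDist n (σ j) (σ k)) with hGA
  set GB := univ.filter (fun σ : Equiv.Perm (Fin n) =>
      ∀ j ∈ R', h < circDist n (σ j) (σ k)) with hGB
  set fA : Equiv.Perm (Fin n) → Finset (Fin n) :=
      fun σ => ((insert k R').image σ)ᶜ with hfA
  set fB : Equiv.Perm (Fin n) → Finset (Fin n) :=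
      fun τ => ((univ.filter (fun b => circDist n (τ k) b ≤ h)) ∪ R'.image τ)ᶜ with hfB
  have hA : (GA.sigma fA).card = GA.card * (n - 1 - R'.card) := by
    rw [Finset.card_sigma]
    rw [Finset.sum_congr rfl (fun σ _ => by
      rw [hfA, Finset.card_compl, Finset.card_image_of_injective _ σ.injective,
        Finset.card_insert_of_notMem hkR, Fintype.card_fin] : ∀ σ ∈ GA, (fA σ).card = n - (R'.card + 1))]
    rw [Finset.sum_const, smul_eq_mul]
    congr 1
    omega
  have hB : (GB.sigma fB).card = GB.card * (n - (2*h+1) - R'.card) := by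
    rw [Finset.card_sigma]
    have hc : ∀ τ ∈ GB, (fB τ).card = n - (2*h+1) - R'.card := by
      intro τ hτ
      rw [hGB, Finset.mem_filter] at hτ
      have hdisj : Disjoint (univ.filter (fun b => circDist n (τ k) b ≤ h)) (R'.image τ) := by
        rw [Finset.disjoint_left]
        intro b hbw hbi
        rw [Finset.mem_filter] at hbw
        obtain ⟨j, hjR', hjb⟩ := Finset.mem_image.mp hbi
        have := hτ.2 j hjR'
        rw [← hjb, circDist_comm] at hbw
        omega
      rw [hfB, Finset.card_compl, Finset.card_union_of_disjoint hdisj,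
        card_window n h hwn (τ k), Finset.card_image_of_injective _ τ.injective,
        Fintype.card_fin]
      omega
    rw [Finset.sum_congr rfl hc, Finset.sum_const, smul_eq_mul]
  rw [← hA, ← hB]
  set Ψ : ((_ : Equiv.Perm (Fin n)) × Fin n) → ((_ : Equiv.Perm (Fin n)) × Fin n) :=
    fun p => ⟨p.1 * Equiv.swap j₀ (p.1⁻¹ p.2), p.1 j₀⟩ with hΨ
  have heval : ∀ (σ : Equiv.Perm (Fin n)) (c x : Fin n), x ≠ j₀ → σ x ≠ c →
      (σ * Equiv.swap j₀ (σ⁻¹ c)) x = σ x := by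
    intro σ c x hx1 hx2
    rw [Equiv.Perm.mul_apply, Equiv.swap_apply_of_ne_of_ne hx1]
    intro hh
    exact hx2 (by rw [hh, Equiv.Perm.coe_inv, Equiv.apply_symm_apply])
  have heval2 : ∀ (σ : Equiv.Perm (Fin n)) (c : Fin n),
      (σ * Equiv.swap j₀ (σ⁻¹ c)) j₀ = c := by
    intro σ c
    rw [Equiv.Perm.mul_apply, Equiv.swap_apply_left, Equiv.Perm.coe_inv, Equiv.apply_symm_apply]
  have hinv : ∀ p, Ψ (Ψ p) = p := by
    rintro ⟨σ, c⟩
    rw [hΨ]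
    simp only
    have h2 : (σ * Equiv.swap j₀ (σ⁻¹ c)) (σ⁻¹ c) = σ j₀ := by
      rw [Equiv.Perm.mul_apply, Equiv.swap_apply_right]
    have h1 : (σ * Equiv.swap j₀ (σ⁻¹ c))⁻¹ (σ j₀) = σ⁻¹ c := by
      rw [← h2]; exact Equiv.symm_apply_apply _ _
    rw [h1, heval2, mul_assoc, Equiv.swap_mul_self, mul_one]
  apply Finset.card_nbij' Ψ Ψ
  · rintro ⟨σ, c⟩ hp
    rw [Finset.mem_coe, Finset.mem_sigma] at hp
    simp only [hΨ]
    obtain ⟨hσ, hc⟩ := hp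
    rw [hGA, Finset.mem_filter] at hσ
    rw [hfA, Finset.mem_compl] at hc
    have hcne : ∀ x ∈ insert k R', σ x ≠ c := by
      intro x hx hxc
      exact hc (Finset.mem_image.mpr ⟨x, hx, hxc⟩)
    have hτk : (σ * Equiv.swap j₀ (σ⁻¹ c)) k = σ k :=
      heval σ c k (Ne.symm hjk) (hcne k (Finset.mem_insert_self k R'))
    have hτj : ∀ j ∈ R', (σ * Equiv.swap j₀ (σ⁻¹ c)) j = σ j := by
      intro j hj
      exact heval σ c j (fun hh => hjR (hh ▸ hj)) (hcne j (Finset.mem_insert_of_mem hj))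
    rw [Finset.mem_coe, Finset.mem_sigma]
    constructor
    · rw [hGB, Finset.mem_filter]
      refine ⟨Finset.mem_univ _, fun j hj => ?_⟩
      rw [hτj j hj, hτk]
      exact hσ.2 j (Finset.mem_insert_of_mem hj)
    · rw [hfB, Finset.mem_compl, Finset.mem_union]
      push_neg
      constructor
      · simp only [Finset.mem_filter, Finset.mem_univ, true_and, not_le]
        rw [hτk, circDist_comm]
        exact hσ.2 j₀ (Finset.mem_insert_self j₀ R')
      · intro hmem
        obtain ⟨j, hj, hje⟩ := Finset.mem_image.mp hmem
        rw [hτj j hj] at hje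
        exact hjR (σ.injective hje ▸ hj)
  · rintro ⟨τ, b⟩ hp
    rw [Finset.mem_coe, Finset.mem_sigma] at hp
    simp only [hΨ]
    obtain ⟨hτ, hb⟩ := hp
    rw [hGB, Finset.mem_filter] at hτ
    rw [hfB, Finset.mem_compl, Finset.mem_union] at hb
    push_neg at hb
    obtain ⟨hbw, hbi⟩ := hb
    rw [Finset.mem_filter] at hbw
    push_neg at hbw
    have hbw' : h < circDist n (τ k) b := hbw (Finset.mem_univ b)
    have hbne : ∀ j ∈ R', τ j ≠ b := by
      intro j hj hje
      exact hbi (Finset.mem_image.mpr ⟨j, hj, hje⟩)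
    have hbk : τ k ≠ b := by
      intro hh
      rw [← hh, circDist_self] at hbw'
      omega
    have hσk : (τ * Equiv.swap j₀ (τ⁻¹ b)) k = τ k := heval τ b k (Ne.symm hjk) hbk
    have hσj : ∀ j ∈ R', (τ * Equiv.swap j₀ (τ⁻¹ b)) j = τ j := by
      intro j hj
      exact heval τ b j (fun hh => hjR (hh ▸ hj)) (hbne j hj)
    rw [Finset.mem_coe, Finset.mem_sigma]
    constructor
    · rw [hGA, Finset.mem_filter]
      refine ⟨Finset.mem_univ _, fun j hj => ?_⟩
      rcases Finset.mem_insert.mp hj with hj0 | hjR'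
      · rw [hj0, heval2, hσk, circDist_comm]
        exact hbw'
      · rw [hσj j hjR', hσk]
        exact hτ.2 j hjR'
    · rw [hfA, Finset.mem_compl]
      intro hmem
      obtain ⟨x, hx, hxe⟩ := Finset.mem_image.mp hmem
      rcases Finset.mem_insert.mp hx with hxk | hxR
      · rw [hxk, hσk] at hxe
        exact hjk (τ.injective hxe).symm
      · rw [hσj x hxR] at hxe
        exact hjR (τ.injective hxe ▸ hxR)
  · intro p _; exact hinv p
  · intro p _; exact hinv p

/-- For `n ≥ 2`, `w = 2h + 1 ≤ n`, a set `R ⊆ Fin n` of cardinality `r`, and `k ∉ R`,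
the probability (over a uniform random permutation `σ` of `Fin n`) that every `j ∈ R`
satisfies `|σ j − σ k|_n > h` is at most `((n − w)/(n − 1))^r`. -/
theorem avoidance_probability (n h : ℕ) (hn : 2 ≤ n) (w : ℕ) (hw : w = 2 * h + 1)
    (hwn : w ≤ n) (r : ℕ) (R : Finset (Fin n)) (hR : R.card = r) (k : Fin n) (hk : k ∉ R) :
    ((Finset.univ.filter
        (fun σ : Equiv.Perm (Fin n) => ∀ j ∈ R, h < circDist n (σ j) (σ k))).card : ℝ)
      / (Fintype.card (Equiv.Perm (Fin n)) : ℝ)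
    ≤ (((n : ℝ) - (w : ℝ)) / ((n : ℝ) - 1)) ^ r := by
  classical
  subst hw
  subst hR
  have hwn' : 2 * h + 1 ≤ n := hwn
  have hNpos : (0 : ℝ) < (Fintype.card (Equiv.Perm (Fin n)) : ℝ) := by
    exact_mod_cast Fintype.card_pos
  have hden : (0 : ℝ) < (n : ℝ) - 1 := by
    have : (2 : ℝ) ≤ (n : ℝ) := by exact_mod_cast hn
    linarith
  have hqnn : (0 : ℝ) ≤ ((n : ℝ) - ((2 * h + 1 : ℕ) : ℝ)) / ((n : ℝ) - 1) := by
    apply div_nonneg _ (le_of_lt hden)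
    have : ((2 * h + 1 : ℕ) : ℝ) ≤ (n : ℝ) := by exact_mod_cast hwn
    linarith
  induction R using Finset.induction_on with
  | empty =>
      have he : (Finset.univ.filter
          (fun σ : Equiv.Perm (Fin n) => ∀ j ∈ (∅ : Finset (Fin n)),
            h < circDist n (σ j) (σ k))) = Finset.univ := by
        simp
      rw [he, Finset.card_univ, Finset.card_empty, pow_zero, div_self (ne_of_gt hNpos)]
  | @insert j₀ R' hjR ih =>
      have hkR' : k ∉ R' := fun hh => hk (Finset.mem_insert_of_mem hh)
      have hjk : j₀ ≠ k := fun hh => hk (hh ▸ Finset.mem_insert_self j₀ R')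
      have ihR := ih hkR'
      have hr2 : R'.card + 2 ≤ n := by
        have h1 : (insert k (insert j₀ R')).card ≤ Fintype.card (Fin n) :=
          Finset.card_le_univ _
        rw [Finset.card_insert_of_notMem hk, Finset.card_insert_of_notMem hjR,
          Fintype.card_fin] at h1
        omega
      have heq := step_eq n h hwn' k j₀ R' hkR' hjR hjk
      have heqR : ((Finset.univ.filter (fun σ : Equiv.Perm (Fin n) =>
            ∀ j ∈ insert j₀ R', h < circDist n (σ j) (σ k))).card : ℝ)
            * ((n - 1 - R'.card : ℕ) : ℝ)
          = ((Finset.univ.filter (fun σ : Equiv.Perm (Fin n) =>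
            ∀ j ∈ R', h < circDist n (σ j) (σ k))).card : ℝ)
            * ((n - (2 * h + 1) - R'.card : ℕ) : ℝ) := by
        exact_mod_cast congrArg (Nat.cast : ℕ → ℝ) heq
      have hd1pos : (0 : ℝ) < ((n - 1 - R'.card : ℕ) : ℝ) := by
        have : 1 ≤ n - 1 - R'.card := by omega
        exact_mod_cast Nat.lt_of_lt_of_le Nat.zero_lt_one this
      have hratio : ((n - (2 * h + 1) - R'.card : ℕ) : ℝ) / ((n - 1 - R'.card : ℕ) : ℝ)
          ≤ ((n : ℝ) - ((2 * h + 1 : ℕ) : ℝ)) / ((n : ℝ) - 1) := by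
        rcases le_or_gt n (2 * h + 1 + R'.card) with hc | hc
        · have : n - (2 * h + 1) - R'.card = 0 := by omega
          rw [this]
          simpa using hqnn
        · rw [div_le_div_iff₀ hd1pos hden]
          have e0 : ((n - (2 * h + 1) - R'.card : ℕ) : ℝ)
              = (n : ℝ) - ((2 * h + 1 : ℕ) : ℝ) - (R'.card : ℝ) := by
            have hle : 2 * h + 1 + R'.card ≤ n := le_of_lt hc
            push_cast [Nat.sub_sub]
            rw [Nat.cast_sub hle]
            push_cast
            ring
          have e1 : ((n - 1 - R'.card : ℕ) : ℝ) = (n : ℝ) - 1 - (R'.card : ℝ) := by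
            have hle : 1 + R'.card ≤ n := by omega
            push_cast [Nat.sub_sub]
            rw [Nat.cast_sub hle]
            push_cast
            ring
          rw [e0, e1]
          have hw1 : (1 : ℝ) ≤ ((2 * h + 1 : ℕ) : ℝ) := by exact_mod_cast Nat.le_add_left 1 (2*h)
          have hrnn : (0 : ℝ) ≤ (R'.card : ℝ) := Nat.cast_nonneg _
          nlinarith
      have hAeq : ((Finset.univ.filter (fun σ : Equiv.Perm (Fin n) =>
            ∀ j ∈ insert j₀ R', h < circDist n (σ j) (σ k))).card : ℝ)
          = ((Finset.univ.filter (fun σ : Equiv.Perm (Fin n) =>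
            ∀ j ∈ R', h < circDist n (σ j) (σ k))).card : ℝ)
            * (((n - (2 * h + 1) - R'.card : ℕ) : ℝ) / ((n - 1 - R'.card : ℕ) : ℝ)) := by
        rw [← mul_div_assoc]
        exact (eq_div_iff (ne_of_gt hd1pos)).mpr heqR
      rw [Finset.card_insert_of_notMem hjR, pow_succ, hAeq]
      have hrw : ((Finset.univ.filter (fun σ : Equiv.Perm (Fin n) =>
            ∀ j ∈ R', h < circDist n (σ j) (σ k))).card : ℝ)
            * (((n - (2 * h + 1) - R'.card : ℕ) : ℝ) / ((n - 1 - R'.card : ℕ) : ℝ))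
            / (Fintype.card (Equiv.Perm (Fin n)) : ℝ)
          = (((Finset.univ.filter (fun σ : Equiv.Perm (Fin n) =>
            ∀ j ∈ R', h < circDist n (σ j) (σ k))).card : ℝ)
            / (Fintype.card (Equiv.Perm (Fin n)) : ℝ))
            * (((n - (2 * h + 1) - R'.card : ℕ) : ℝ) / ((n - 1 - R'.card : ℕ) : ℝ)) := by
        ring
      rw [hrw]
      exact mul_le_mul ihR hratio
        (div_nonneg (Nat.cast_nonneg _) (Nat.cast_nonneg _))
        (pow_nonneg hqnn _)
end

section
/- Let n ≥ 2 and w ≥ 2 be real numbers, set p = (w − 1)/(n − 1), and let r be a natural number with 1 ≤ r, r ≤ n/2, and r·p ≤ 1. Then r + (n − r)·(1 − (1 − p)^r) ≥ r·(1 + (w − 1)/4). -/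
lemma pow_one_sub_le (p : ℝ) (hp0 : 0 ≤ p) (hp1 : p ≤ 1) :
    ∀ r : ℕ, (1 - p) ^ r ≤ 1 - r * p + (r * p) ^ 2 / 2 := by
  intro r
  induction r with
  | zero => simp
  | succ k ih =>
    have h1 : (0:ℝ) ≤ 1 - p := by linarith
    have := mul_le_mul_of_nonneg_right ih h1
    have hk : (0:ℝ) ≤ (k:ℝ) := Nat.cast_nonneg k
    push_cast
    rw [pow_succ]
    nlinarith [sq_nonneg ((k:ℝ)*p), mul_nonneg (mul_nonneg hk hp0) (mul_nonneg hk hp0)]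

/-- Deterministic arithmetic step: for real `n ≥ 2`, `w ≥ 2`, `p = (w − 1)/(n − 1)`,
and a natural number `r` with `1 ≤ r`, `r ≤ n/2`, `r·p ≤ 1`, one has
`r + (n − r)(1 − (1 − p)^r) ≥ r(1 + (w − 1)/4)`. -/
theorem expansion_arithmetic (n w : ℝ) (hn : 2 ≤ n) (hw : 2 ≤ w)
    (p : ℝ) (hp : p = (w - 1) / (n - 1)) (r : ℕ) (hr1 : 1 ≤ r)
    (hr2 : (r : ℝ) ≤ n / 2) (hrp : (r : ℝ) * p ≤ 1) :
    (r : ℝ) + (n - (r : ℝ)) * (1 - (1 - p) ^ r) ≥ (r : ℝ) * (1 + (w - 1) / 4) := by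
  have hn1 : (0:ℝ) < n - 1 := by linarith
  have hp0 : 0 ≤ p := by
    rw [hp]; exact div_nonneg (by linarith) (by linarith)
  have hrpos : (1:ℝ) ≤ (r:ℝ) := by exact_mod_cast hr1
  have hp1 : p ≤ 1 := by nlinarith
  have hpow := pow_one_sub_le p hp0 hp1 r
  have hrp0 : (0:ℝ) ≤ (r:ℝ) * p := mul_nonneg (Nat.cast_nonneg r) hp0
  have hlow : (r:ℝ) * p / 2 ≤ 1 - (1 - p) ^ r := by nlinarith [mul_nonneg hrp0 (by linarith : (0:ℝ) ≤ 1 - (r:ℝ)*p)]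
  have hnr : n / 2 ≤ n - (r:ℝ) := by linarith
  have hpn : p * (n - 1) = w - 1 := by rw [hp]; field_simp
  have hpowle1 : (1 - p) ^ r ≤ 1 := by
    apply pow_le_one₀ (by linarith) (by linarith)
  have h2 : (n - (r:ℝ)) * (1 - (1 - p) ^ r) ≥ (n / 2) * ((r:ℝ) * p / 2) := by
    apply mul_le_mul hnr hlow (by positivity) (by linarith)
  nlinarith [mul_nonneg (mul_nonneg (le_trans zero_le_one hrpos) hp0) (le_of_lt hn1)]
end

section
/- Let n ≥ 2 and h ≥ 0 be integers with w = 2h + 1 ≤ n, let R ⊆ Fin n have cardinality r with 1 ≤ r ≤ n/2 and r·(w − 1)/(n − 1) ≤ 1, and for a permutation σ of Fin n define R'_σ = R ∪ {k ∈ Fin n : ∃ j ∈ R, |σ(j) − σ(k)|_n ≤ h}. Then for σ drawn uniformly at random from the permutations of Fin n, E_σ[|R'_σ|] ≥ r·(1 + (w − 1)/4). -/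
open scoped Classical

lemma circDist_sub (n : ℕ) (s b : Fin n) :
    circDist n s b = min ((s - b).val) (n - (s - b).val) := by
  have hb := b.isLt
  have hs := s.isLt
  have hv : (s - b).val = (n - b.val + s.val) % n := by
    rw [Fin.sub_def]
  rcases lt_or_ge (n - b.val + s.val) n with H | H
  · rw [Nat.mod_eq_of_lt H] at hv
    unfold circDist; omega
  · have : (n - b.val + s.val) % n = n - b.val + s.val - n := by
      rw [Nat.mod_eq_sub_mod H, Nat.mod_eq_of_lt (by omega)]
    rw [this] at hv
    unfold circDist; omega

lemma range_window (n h w : ℕ) (hw : w = 2 * h + 1) (hwn : w ≤ n) :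
    ((Finset.range n).filter fun x => min x (n - x) ≤ h).card = w := by
  have : ((Finset.range n).filter fun x => min x (n - x) ≤ h)
      = Finset.range (h+1) ∪ Finset.Ico (n-h) n := by
    ext x
    simp only [Finset.mem_filter, Finset.mem_range, Finset.mem_union, Finset.mem_Ico]
    omega
  rw [this, Finset.card_union_of_disjoint, Finset.card_range, Nat.card_Ico]
  · omega
  · rw [Finset.disjoint_left]
    intro x hx hx'
    simp only [Finset.mem_range, Finset.mem_Ico] at *
    omega

lemma window_card (n h w : ℕ) (hw : w = 2 * h + 1) (hwn : w ≤ n) (b : Fin n) :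
    (Finset.univ.filter fun s : Fin n => circDist n s b ≤ h).card = w := by
  have hn : 0 < n := by omega
  haveI : NeZero n := ⟨by omega⟩
  have e1 : (Finset.univ.filter fun s : Fin n => circDist n s b ≤ h).card
      = ((Finset.range n).filter fun x => min x (n - x) ≤ h).card := by
    refine Finset.card_bij'
      (i := fun s _ => (s - b).val)
      (j := fun x hx => (⟨x, Finset.mem_range.mp (Finset.mem_filter.mp hx).1⟩ : Fin n) + b)
      ?_ ?_ ?_ ?_
    · intro s hs
      simp only [Finset.mem_filter, Finset.mem_univ, true_and] at hs ⊢
      refine ⟨Finset.mem_range.mpr (s - b).isLt, ?_⟩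
      rwa [circDist_sub] at hs
    · intro x hx
      simp only [Finset.mem_filter, Finset.mem_univ, true_and]
      have hx' := Finset.mem_filter.mp hx
      rw [circDist_sub, add_sub_cancel_right]
      simpa using hx'.2
    · intro s _
      simp [sub_add_cancel]
    · intro x hx
      simp [add_sub_cancel_right]
  rw [e1, range_window n h w hw hwn]

lemma fiber1_const (n : ℕ) (j : Fin n) (s t : Fin n) :
    (Finset.univ.filter fun σ : Equiv.Perm (Fin n) => σ j = s).card
    = (Finset.univ.filter fun σ : Equiv.Perm (Fin n) => σ j = t).card := by
  refine Finset.card_bij'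
    (i := fun σ _ => Equiv.swap s t * σ)
    (j := fun σ _ => Equiv.swap s t * σ) ?_ ?_ ?_ ?_
  · intro σ hσ
    simp only [Finset.mem_filter, Finset.mem_univ, true_and] at hσ ⊢
    show Equiv.swap s t (σ j) = t
    rw [hσ, Equiv.swap_apply_left]
  · intro σ hσ
    simp only [Finset.mem_filter, Finset.mem_univ, true_and] at hσ ⊢
    show Equiv.swap s t (σ j) = s
    rw [hσ, Equiv.swap_apply_right]
  · intro σ _
    show Equiv.swap s t * (Equiv.swap s t * σ) = σ
    rw [← mul_assoc, Equiv.swap_mul_self, one_mul]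
  · intro σ _
    show Equiv.swap s t * (Equiv.swap s t * σ) = σ
    rw [← mul_assoc, Equiv.swap_mul_self, one_mul]

lemma card_fiber1 (n : ℕ) (j s : Fin n) :
    (Finset.univ.filter fun σ : Equiv.Perm (Fin n) => σ j = s).card = (n - 1).factorial := by
  have hn : 0 < n := j.pos
  have hsum : ∑ t : Fin n, (Finset.univ.filter fun σ : Equiv.Perm (Fin n) => σ j = t).card
      = n.factorial := by
    rw [← Finset.card_eq_sum_card_fiberwise (f := fun σ : Equiv.Perm (Fin n) => σ j)
      (fun σ _ => Finset.mem_univ _)]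
    simp [Fintype.card_perm]
  have hconst : ∀ t : Fin n,
      (Finset.univ.filter fun σ : Equiv.Perm (Fin n) => σ j = t).card
      = (Finset.univ.filter fun σ : Equiv.Perm (Fin n) => σ j = s).card :=
    fun t => fiber1_const n j t s
  rw [Finset.sum_congr rfl (fun t _ => hconst t), Finset.sum_const, Finset.card_univ,
    Fintype.card_fin, smul_eq_mul] at hsum
  have hfact : n.factorial = n * (n-1).factorial := by
    conv_lhs => rw [show n = (n-1) + 1 by omega]
    rw [Nat.factorial_succ]
    congr 1; omega
  rw [hfact] at hsum
  exact Nat.eq_of_mul_eq_mul_left hn hsum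

lemma exists_perm_two (n : ℕ) (s s' t t' : Fin n) (hs : s ≠ s') (ht : t ≠ t') :
    ∃ τ : Equiv.Perm (Fin n), τ s = t ∧ τ s' = t' := by
  set s₂ := Equiv.swap s t s' with hs₂
  have h2t : s₂ ≠ t := by
    by_cases h : s' = t
    · have hst : s ≠ t := fun e => hs (e.trans h.symm)
      rw [hs₂, h, Equiv.swap_apply_right]
      exact hst
    · rw [hs₂, Equiv.swap_apply_of_ne_of_ne hs.symm h]
      exact h
  refine ⟨Equiv.swap s₂ t' * Equiv.swap s t, ?_, ?_⟩
  · show Equiv.swap s₂ t' (Equiv.swap s t s) = t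
    rw [Equiv.swap_apply_left, Equiv.swap_apply_of_ne_of_ne h2t.symm ht]
  · show Equiv.swap s₂ t' (Equiv.swap s t s') = t'
    rw [← hs₂, Equiv.swap_apply_left]

lemma fiber2_const (n : ℕ) (j j' : Fin n) (s s' t t' : Fin n) (hs : s ≠ s') (ht : t ≠ t') :
    (Finset.univ.filter fun σ : Equiv.Perm (Fin n) => σ j = s ∧ σ j' = s').card
    = (Finset.univ.filter fun σ : Equiv.Perm (Fin n) => σ j = t ∧ σ j' = t').card := by
  obtain ⟨τ, hτ1, hτ2⟩ := exists_perm_two n s s' t t' hs ht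
  refine Finset.card_bij'
    (i := fun σ _ => τ * σ) (j := fun σ _ => τ⁻¹ * σ) ?_ ?_ ?_ ?_
  · intro σ hσ
    simp only [Finset.mem_filter, Finset.mem_univ, true_and] at hσ ⊢
    refine ⟨?_, ?_⟩
    · show τ (σ j) = t; rw [hσ.1, hτ1]
    · show τ (σ j') = t'; rw [hσ.2, hτ2]
  · intro σ hσ
    simp only [Finset.mem_filter, Finset.mem_univ, true_and] at hσ ⊢
    constructor
    · show τ⁻¹ (σ j) = s
      rw [hσ.1, ← hτ1, Equiv.Perm.inv_def, Equiv.symm_apply_apply]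
    · show τ⁻¹ (σ j') = s'
      rw [hσ.2, ← hτ2, Equiv.Perm.inv_def, Equiv.symm_apply_apply]
  · intro σ _
    show τ⁻¹ * (τ * σ) = σ
    rw [← mul_assoc, inv_mul_cancel, one_mul]
  · intro σ _
    show τ * (τ⁻¹ * σ) = σ
    rw [← mul_assoc, mul_inv_cancel, one_mul]

lemma card_fiber2 (n : ℕ) (j j' s s' : Fin n) (hj : j ≠ j') (hs : s ≠ s') :
    (Finset.univ.filter fun σ : Equiv.Perm (Fin n) => σ j = s ∧ σ j' = s').card
    = (n - 2).factorial := by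
  have hn2 : 2 ≤ n := by
    rcases Fin.pos_iff_nonempty.mp j.pos with _
    by_contra hlt
    interval_cases n
    · exact absurd j.isLt (by omega)
    · exact hj (Subsingleton.elim j j')
  obtain ⟨m, rfl⟩ : ∃ m, n = m + 2 := ⟨n - 2, by omega⟩
  have hsum : ∑ p ∈ (Finset.univ : Finset (Fin (m+2))).offDiag,
      (Finset.univ.filter fun σ : Equiv.Perm (Fin (m+2)) => σ j = p.1 ∧ σ j' = p.2).card
      = (m+2).factorial := by
    have h2 := Finset.card_eq_sum_card_fiberwise
      (f := fun σ : Equiv.Perm (Fin (m+2)) => (σ j, σ j'))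
      (s := (Finset.univ : Finset (Equiv.Perm (Fin (m+2)))))
      (t := (Finset.univ : Finset (Fin (m+2))).offDiag)
      (fun σ _ => by
        simp only [Finset.mem_coe, Finset.mem_offDiag, Finset.mem_univ, true_and]
        exact fun e => hj (σ.injective e))
    rw [Finset.card_univ, Fintype.card_perm, Fintype.card_fin] at h2
    rw [h2]
    apply Finset.sum_congr rfl
    intro p _
    congr 1
    ext σ
    simp [Prod.ext_iff]
  have hmem : ((s, s') : Fin (m+2) × Fin (m+2)) ∈ (Finset.univ : Finset (Fin (m+2))).offDiag := by
    simp [Finset.mem_offDiag, hs]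
  have hconst : ∀ p ∈ (Finset.univ : Finset (Fin (m+2))).offDiag,
      (Finset.univ.filter fun σ : Equiv.Perm (Fin (m+2)) => σ j = p.1 ∧ σ j' = p.2).card
      = (Finset.univ.filter fun σ : Equiv.Perm (Fin (m+2)) => σ j = s ∧ σ j' = s').card := by
    intro p hp
    have hp' := Finset.mem_offDiag.mp hp
    exact fiber2_const (m+2) j j' p.1 p.2 s s' hp'.2.2 hs
  rw [Finset.sum_congr rfl hconst, Finset.sum_const, smul_eq_mul, Finset.offDiag_card,
    Finset.card_univ, Fintype.card_fin] at hsum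
  have key : (m+2) * (m+2) - (m+2) = (m+2) * (m+1) := Nat.sub_eq_of_eq_add (by ring)
  have hfact : (m+2).factorial = ((m+2)*(m+1)) * m.factorial := by
    show (m+1+1).factorial = _
    rw [Nat.factorial_succ, Nat.factorial_succ]
    ring
  rw [key, hfact] at hsum
  have : (Finset.univ.filter fun σ : Equiv.Perm (Fin (m+2)) => σ j = s ∧ σ j' = s').card
      = m.factorial := Nat.eq_of_mul_eq_mul_left (by positivity) hsum
  rw [this, Nat.add_sub_cancel]


lemma sum_k (n h : ℕ) (R : Finset (Fin n)) (b : Fin n) :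
    ∑ σ : Equiv.Perm (Fin n), (R.filter fun j => circDist n (σ j) b ≤ h).card
    = R.card * (Finset.univ.filter fun s : Fin n => circDist n s b ≤ h).card
      * (n-1).factorial := by
  set Sb := Finset.univ.filter fun s : Fin n => circDist n s b ≤ h with hSb
  have e1 : ∀ σ : Equiv.Perm (Fin n),
      (R.filter fun j => circDist n (σ j) b ≤ h).card
      = ∑ j ∈ R, ∑ s ∈ Sb, if σ j = s then 1 else 0 := by
    intro σ
    rw [Finset.card_filter]
    apply Finset.sum_congr rfl
    intro j _
    rw [Finset.sum_ite_eq Sb (σ j) (fun _ => 1), hSb]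
    simp
  rw [Finset.sum_congr rfl (fun σ _ => e1 σ), Finset.sum_comm]
  have e2 : ∀ j ∈ R, ∑ σ : Equiv.Perm (Fin n), ∑ s ∈ Sb, (if σ j = s then 1 else 0)
      = Sb.card * (n-1).factorial := by
    intro j _
    rw [Finset.sum_comm]
    have : ∀ s ∈ Sb, ∑ σ : Equiv.Perm (Fin n), (if σ j = s then 1 else 0)
        = (n-1).factorial := by
      intro s _
      rw [← Finset.card_filter]
      exact card_fiber1 n j s
    rw [Finset.sum_congr rfl this, Finset.sum_const, smul_eq_mul]
  rw [Finset.sum_congr rfl e2, Finset.sum_const, smul_eq_mul, mul_assoc]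

lemma offDiag_filter_eq (n : ℕ) (R : Finset (Fin n)) (P : Fin n → Prop) [DecidablePred P] :
    (R.filter P).offDiag = R.offDiag.filter (fun p => P p.1 ∧ P p.2) := by
  ext p
  simp only [Finset.mem_offDiag, Finset.mem_filter]
  tauto

lemma sum_kk (n h : ℕ) (R : Finset (Fin n)) (b : Fin n) :
    ∑ σ : Equiv.Perm (Fin n), ((R.filter fun j => circDist n (σ j) b ≤ h).offDiag).card
    = R.offDiag.card
      * ((Finset.univ.filter fun s : Fin n => circDist n s b ≤ h).offDiag).card
      * (n-2).factorial := by
  set Sb := Finset.univ.filter fun s : Fin n => circDist n s b ≤ h with hSb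
  have e1 : ∀ σ : Equiv.Perm (Fin n),
      ((R.filter fun j => circDist n (σ j) b ≤ h).offDiag).card
      = ∑ p ∈ R.offDiag, ∑ q ∈ Sb.offDiag, if (σ p.1, σ p.2) = q then 1 else 0 := by
    intro σ
    rw [offDiag_filter_eq, Finset.card_filter]
    apply Finset.sum_congr rfl
    intro p hp
    have hp12 : p.1 ≠ p.2 := (Finset.mem_offDiag.mp hp).2.2
    rw [Finset.sum_ite_eq Sb.offDiag (σ p.1, σ p.2) (fun _ => 1)]
    congr 1
    have : (σ p.1, σ p.2) ∈ Sb.offDiag ↔ (σ p.1 ∈ Sb ∧ σ p.2 ∈ Sb) := by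
      rw [Finset.mem_offDiag]
      have : σ p.1 ≠ σ p.2 := fun e => hp12 (σ.injective e)
      tauto
    rw [eq_iff_iff, this, hSb]
    simp
  rw [Finset.sum_congr rfl (fun σ _ => e1 σ), Finset.sum_comm]
  have e2 : ∀ p ∈ R.offDiag,
      ∑ σ : Equiv.Perm (Fin n), ∑ q ∈ Sb.offDiag, (if (σ p.1, σ p.2) = q then 1 else 0)
      = Sb.offDiag.card * (n-2).factorial := by
    intro p hp
    have hp12 : p.1 ≠ p.2 := (Finset.mem_offDiag.mp hp).2.2
    rw [Finset.sum_comm]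
    have : ∀ q ∈ Sb.offDiag, ∑ σ : Equiv.Perm (Fin n), (if (σ p.1, σ p.2) = q then 1 else 0)
        = (n-2).factorial := by
      intro q hq
      have hq12 : q.1 ≠ q.2 := (Finset.mem_offDiag.mp hq).2.2
      rw [← Finset.card_filter]
      rw [← card_fiber2 n p.1 p.2 q.1 q.2 hp12 hq12]
      congr 1
      ext σ
      simp [Prod.ext_iff]
    rw [Finset.sum_congr rfl this, Finset.sum_const, smul_eq_mul]
  rw [Finset.sum_congr rfl e2, Finset.sum_const, smul_eq_mul, mul_assoc]

/-- One layer of stochastic-attention receptive-field expansion: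
`R'_σ = R ∪ {k : ∃ j ∈ R, |σ j − σ k|_n ≤ h}`. -/
noncomputable def expandOnce (n h : ℕ) (R : Finset (Fin n)) (σ : Equiv.Perm (Fin n)) :
    Finset (Fin n) :=
  R ∪ Finset.univ.filter (fun k => ∃ j ∈ R, circDist n (σ j) (σ k) ≤ h)

/-- For `n ≥ 2`, `w = 2h + 1 ≤ n`, and `R ⊆ Fin n` with `|R| = r`, `1 ≤ r ≤ n/2`, and
`r·(w − 1)/(n − 1) ≤ 1`, the expected size of one layer of stochastic-attention expansion
under a uniform random permutation satisfies `E_σ[|R'_σ|] ≥ r·(1 + (w − 1)/4)`. -/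
theorem expected_expansion_multiplicative (n h : ℕ) (hn : 2 ≤ n) (w : ℕ)
    (hw : w = 2 * h + 1) (hwn : w ≤ n) (r : ℕ) (R : Finset (Fin n)) (hR : R.card = r)
    (hr1 : 1 ≤ r) (hr2 : (r : ℝ) ≤ (n : ℝ) / 2)
    (hrp : (r : ℝ) * ((w : ℝ) - 1) / ((n : ℝ) - 1) ≤ 1) :
    (∑ σ : Equiv.Perm (Fin n), ((expandOnce n h R σ).card : ℝ))
      / (Fintype.card (Equiv.Perm (Fin n)) : ℝ)
    ≥ (r : ℝ) * (1 + ((w : ℝ) - 1) / 4) := by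
  -- step 1
  have step1 : ∀ σ : Equiv.Perm (Fin n), (expandOnce n h R σ).card
      = (Finset.univ.filter fun b : Fin n => ∃ j ∈ R, circDist n (σ j) b ≤ h).card := by
    intro σ
    have hsub : R ⊆ Finset.univ.filter (fun k => ∃ j ∈ R, circDist n (σ j) (σ k) ≤ h) := by
      intro j hj
      simp only [Finset.mem_filter, Finset.mem_univ, true_and]
      refine ⟨j, hj, ?_⟩
      unfold circDist
      simp
    rw [expandOnce, Finset.union_eq_right.mpr hsub]
    apply Finset.card_bij (fun k _ => σ k)
    · intro k hk
      simp only [Finset.mem_filter, Finset.mem_univ, true_and] at hk ⊢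
      exact hk
    · intro k1 _ k2 _ e
      exact σ.injective e
    · intro b hb
      refine ⟨σ.symm b, ?_, by simp⟩
      simp only [Finset.mem_filter, Finset.mem_univ, true_and] at hb ⊢
      simpa using hb
  -- step 2 : swap sums (ℕ)
  have step2 : ∑ σ : Equiv.Perm (Fin n), (expandOnce n h R σ).card
      = ∑ b : Fin n,
        (Finset.univ.filter fun σ : Equiv.Perm (Fin n) => ∃ j ∈ R, circDist n (σ j) b ≤ h).card := by
    rw [Finset.sum_congr rfl (fun σ _ => step1 σ)]
    have l : ∀ σ : Equiv.Perm (Fin n),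
        (Finset.univ.filter fun b : Fin n => ∃ j ∈ R, circDist n (σ j) b ≤ h).card
        = ∑ b : Fin n, if ∃ j ∈ R, circDist n (σ j) b ≤ h then 1 else 0 :=
      fun σ => Finset.card_filter _ _
    rw [Finset.sum_congr rfl (fun σ _ => l σ), Finset.sum_comm]
    exact Finset.sum_congr rfl (fun b _ => (Finset.card_filter _ _).symm)
  -- per-b lower bound (ℝ)
  have step3 : ∀ b : Fin n,
      (((Finset.univ.filter fun σ : Equiv.Perm (Fin n) =>
          ∃ j ∈ R, circDist n (σ j) b ≤ h).card : ℕ) : ℝ)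
      ≥ (r * w * (n-1).factorial : ℕ)
        - ((r*r - r) * (w*w - w) * (n-2).factorial : ℕ) / 2 := by
    intro b
    set kf : Equiv.Perm (Fin n) → ℕ :=
      fun σ => (R.filter fun j => circDist n (σ j) b ≤ h).card with hkf
    have hsum1 : ∑ σ : Equiv.Perm (Fin n), kf σ
        = r * w * (n-1).factorial := by
      rw [hkf, sum_k n h R b, hR, window_card n h w hw hwn b]
    have hsum2 : ∑ σ : Equiv.Perm (Fin n), (kf σ * kf σ - kf σ)
        = (r*r - r) * (w*w - w) * (n-2).factorial := by
      have e : ∀ σ : Equiv.Perm (Fin n), kf σ * kf σ - kf σ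
          = ((R.filter fun j => circDist n (σ j) b ≤ h).offDiag).card := by
        intro σ
        rw [Finset.offDiag_card]
      rw [Finset.sum_congr rfl (fun σ _ => e σ), sum_kk n h R b,
        Finset.offDiag_card, Finset.offDiag_card, hR, window_card n h w hw hwn b]
    have hcard : ((Finset.univ.filter fun σ : Equiv.Perm (Fin n) =>
          ∃ j ∈ R, circDist n (σ j) b ≤ h).card : ℝ)
        = ∑ σ : Equiv.Perm (Fin n),
            (if ∃ j ∈ R, circDist n (σ j) b ≤ h then (1:ℝ) else 0) := by
      rw [Finset.card_filter]
      push_cast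
      rfl
    have hle : ∀ m : ℕ, m ≤ m * m := fun m => by nlinarith
    have hpt : ∀ σ : Equiv.Perm (Fin n),
        (if ∃ j ∈ R, circDist n (σ j) b ≤ h then (1:ℝ) else 0)
        ≥ (kf σ : ℝ) - ((kf σ * kf σ - kf σ : ℕ) : ℝ) / 2 := by
      intro σ
      have hoff : ((kf σ * kf σ - kf σ : ℕ) : ℝ) = (kf σ : ℝ) * (kf σ : ℝ) - (kf σ : ℝ) := by
        push_cast [Nat.cast_sub (hle (kf σ))]
        ring
      by_cases hex : ∃ j ∈ R, circDist n (σ j) b ≤ h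
      · obtain ⟨j, hj, hd⟩ := hex
        have hk1 : 1 ≤ kf σ := by
          rw [hkf]
          exact Finset.card_pos.mpr ⟨j, Finset.mem_filter.mpr ⟨hj, hd⟩⟩
        rw [if_pos ⟨j, hj, hd⟩, ge_iff_le, hoff]
        rcases Nat.lt_or_ge (kf σ) 2 with hk2 | hk2
        · have h1 : kf σ = 1 := by omega
          rw [h1]
          norm_num
        · have hx : (2:ℝ) ≤ (kf σ : ℝ) := by exact_mod_cast hk2
          nlinarith
      · have hk0 : kf σ = 0 := by
          rw [hkf, Finset.card_eq_zero, Finset.filter_eq_empty_iff]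
          intro j hj hd
          exact hex ⟨j, hj, hd⟩
        rw [if_neg hex, hk0]
        norm_num
    rw [hcard]
    calc ∑ σ : Equiv.Perm (Fin n),
          (if ∃ j ∈ R, circDist n (σ j) b ≤ h then (1:ℝ) else 0)
        ≥ ∑ σ : Equiv.Perm (Fin n),
            ((kf σ : ℝ) - ((kf σ * kf σ - kf σ : ℕ) : ℝ) / 2) :=
          Finset.sum_le_sum (fun σ _ => hpt σ)
      _ = ((r * w * (n-1).factorial : ℕ) : ℝ)
          - ((((r*r - r) * (w*w - w) * (n-2).factorial : ℕ)) : ℝ) / 2 := by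
          rw [Finset.sum_sub_distrib, ← Finset.sum_div, ← Nat.cast_sum, ← Nat.cast_sum,
            hsum1, hsum2]
  -- total lower bound
  have hTot : (∑ σ : Equiv.Perm (Fin n), ((expandOnce n h R σ).card : ℝ))
      ≥ (n : ℝ) * (((r * w * (n-1).factorial : ℕ) : ℝ)
        - (((r*r - r) * (w*w - w) * (n-2).factorial : ℕ) : ℝ) / 2) := by
    have hS : (∑ σ : Equiv.Perm (Fin n), ((expandOnce n h R σ).card : ℝ))
        = ∑ b : Fin n, (((Finset.univ.filter fun σ : Equiv.Perm (Fin n) =>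
            ∃ j ∈ R, circDist n (σ j) b ≤ h).card : ℕ) : ℝ) := by
      rw [← Nat.cast_sum, step2, Nat.cast_sum]
    rw [hS]
    calc ∑ b : Fin n, (((Finset.univ.filter fun σ : Equiv.Perm (Fin n) =>
            ∃ j ∈ R, circDist n (σ j) b ≤ h).card : ℕ) : ℝ)
        ≥ ∑ _b : Fin n, (((r * w * (n-1).factorial : ℕ) : ℝ)
          - (((r*r - r) * (w*w - w) * (n-2).factorial : ℕ) : ℝ) / 2) :=
          Finset.sum_le_sum (fun b _ => step3 b)
      _ = (n : ℝ) * _ := by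
          rw [Finset.sum_const, Finset.card_univ, Fintype.card_fin, nsmul_eq_mul]
  -- final arithmetic
  have hle : ∀ m : ℕ, m ≤ m * m := fun m => by nlinarith
  have hNf : ((Fintype.card (Equiv.Perm (Fin n)) : ℕ) : ℝ) = (n.factorial : ℝ) := by
    rw [Fintype.card_perm, Fintype.card_fin]
  have hNpos : (0:ℝ) < ((Fintype.card (Equiv.Perm (Fin n)) : ℕ) : ℝ) := by
    rw [hNf]
    exact_mod_cast n.factorial_pos
  have f1 : n.factorial = n * (n-1).factorial := by
    conv_lhs => rw [show n = (n-1)+1 by omega]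
    rw [Nat.factorial_succ]
    congr 1
    omega
  have f2 : (n-1).factorial = (n-1) * (n-2).factorial := by
    conv_lhs => rw [show n-1 = (n-2)+1 by omega]
    rw [Nat.factorial_succ]
    congr 1
    omega
  have hn1 : ((n-1:ℕ):ℝ) = (n:ℝ) - 1 := by
    push_cast [Nat.cast_sub (show 1 ≤ n by omega)]
    ring
  set F2 : ℝ := ((n-2).factorial : ℝ) with hF2
  have hF2pos : (0:ℝ) < F2 := by rw [hF2]; exact_mod_cast (n-2).factorial_pos
  have hXpos : (0:ℝ) < (n:ℝ) := by positivity
  have hX2 : (2:ℝ) ≤ (n:ℝ) := by exact_mod_cast hn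
  have hW1 : (1:ℝ) ≤ (w:ℝ) := by
    have : 1 ≤ w := by omega
    exact_mod_cast this
  have hR1 : (1:ℝ) ≤ (r:ℝ) := by exact_mod_cast hr1
  have hA : (r:ℝ) * ((w:ℝ) - 1) ≤ (n:ℝ) - 1 := by
    have h1 : (0:ℝ) < (n:ℝ) - 1 := by linarith
    calc (r:ℝ) * ((w:ℝ) - 1) = ((r:ℝ) * ((w:ℝ) - 1) / ((n:ℝ) - 1)) * ((n:ℝ) - 1) := by
          field_simp
      _ ≤ 1 * ((n:ℝ) - 1) := by
          apply mul_le_mul_of_nonneg_right hrp (le_of_lt h1)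
      _ = (n:ℝ) - 1 := by ring
  have h3 : 2 * ((r:ℝ) - 1) * (w:ℝ) ≤ 3 * ((n:ℝ) - 1) := by linarith [hA, hr2, hW1]
  have key : (r:ℝ) * (1 + ((w:ℝ) - 1) / 4) * ((n:ℝ) - 1)
      ≤ (r:ℝ) * (w:ℝ) * ((n:ℝ) - 1)
        - ((r:ℝ)*(r:ℝ) - (r:ℝ)) * ((w:ℝ)*(w:ℝ) - (w:ℝ)) / 2 := by
    linarith [mul_nonneg (mul_nonneg (by linarith : (0:ℝ) ≤ (r:ℝ))
      (by linarith : (0:ℝ) ≤ (w:ℝ) - 1))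
      (by linarith : (0:ℝ) ≤ 3 * ((n:ℝ) - 1) - 2 * ((r:ℝ) - 1) * (w:ℝ))]
  rw [ge_iff_le, le_div_iff₀ hNpos]
  refine le_trans ?_ hTot
  have hcastfact : ((n.factorial : ℕ) : ℝ) = (n:ℝ) * ((n:ℝ) - 1) * F2 := by
    rw [f1, f2]
    push_cast [hn1]
    rw [← hF2]
    ring
  have hD : (((r*r - r) * (w*w - w) * (n-2).factorial : ℕ) : ℝ)
      = ((r:ℝ)*(r:ℝ) - (r:ℝ)) * ((w:ℝ)*(w:ℝ) - (w:ℝ)) * F2 := by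
    push_cast [Nat.cast_sub (hle r), Nat.cast_sub (hle w)]
    rw [← hF2]
  have hC1 : ((r * w * (n-1).factorial : ℕ) : ℝ) = (r:ℝ) * (w:ℝ) * (((n:ℝ) - 1) * F2) := by
    rw [f2]
    push_cast [hn1]
    rw [← hF2]
  rw [hNf, hcastfact, hD, hC1]
  calc (r:ℝ) * (1 + ((w:ℝ) - 1) / 4) * ((n:ℝ) * ((n:ℝ) - 1) * F2)
      = ((n:ℝ) * F2) * ((r:ℝ) * (1 + ((w:ℝ) - 1) / 4) * ((n:ℝ) - 1)) := by ring
    _ ≤ ((n:ℝ) * F2) * ((r:ℝ) * (w:ℝ) * ((n:ℝ) - 1)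
        - ((r:ℝ)*(r:ℝ) - (r:ℝ)) * ((w:ℝ)*(w:ℝ) - (w:ℝ)) / 2) := by
        apply mul_le_mul_of_nonneg_left key (by positivity)
    _ = (n:ℝ) * ((r:ℝ) * (w:ℝ) * (((n:ℝ) - 1) * F2)
        - ((r:ℝ)*(r:ℝ) - (r:ℝ)) * ((w:ℝ)*(w:ℝ) - (w:ℝ)) * F2 / 2) := by ring
end

section
/- Let n ≥ 2 and 1 ≤ w ≤ n be integers, let V : Fin n → ℝ^d satisfy ‖V_j‖ ≤ B for all j, let V̄ = (1/n)·Σ_{j} V_j, let S be a subset of Fin n of cardinality w drawn uniformly at random among all w-element subsets, and let X = (1/w)·Σ_{j ∈ S} V_j. Then E[‖X − V̄‖²] ≤ 4B²/w. -/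
open Finset

lemma count_supersets {α : Type*} [DecidableEq α] (s t : Finset α) (w : ℕ)
    (hts : t ⊆ s) (htw : t.card ≤ w) :
    ((Finset.powersetCard w s).filter (fun S => t ⊆ S)).card
      = (s.card - t.card).choose (w - t.card) := by
  rw [← Finset.card_sdiff_of_subset hts, ← Finset.card_powersetCard]
  apply Finset.card_nbij' (fun S => S \ t) (fun A => A ∪ t)
  · intro S hS
    simp only [Finset.mem_coe, Finset.mem_filter, Finset.mem_powersetCard] at hS ⊢
    obtain ⟨⟨hSs, hSc⟩, htS⟩ := hS
    refine ⟨Finset.sdiff_subset_sdiff hSs le_rfl, ?_⟩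
    rw [Finset.card_sdiff_of_subset htS, hSc]
  · intro A hA
    simp only [Finset.mem_coe, Finset.mem_filter, Finset.mem_powersetCard, Finset.mem_sdiff] at hA ⊢
    obtain ⟨hAs, hAc⟩ := hA
    have hdisj : Disjoint A t := Finset.disjoint_left.2 fun a ha => (Finset.mem_sdiff.1 (hAs ha)).2
    constructor
    · constructor
      · exact Finset.union_subset (fun a ha => (Finset.mem_sdiff.1 (hAs ha)).1) hts
      · rw [Finset.card_union_of_disjoint hdisj, hAc, Nat.sub_add_cancel htw]
    · exact Finset.subset_union_right
  · intro S hS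
    simp only [Finset.mem_coe, Finset.mem_filter] at hS
    exact Finset.sdiff_union_of_subset hS.2
  · intro A hA
    simp only [Finset.mem_coe, Finset.mem_powersetCard, Finset.mem_sdiff] at hA
    have hdisj : Disjoint A t := Finset.disjoint_left.2 fun a ha => (Finset.mem_sdiff.1 (hA.1 ha)).2
    exact Finset.union_sdiff_cancel_right hdisj

open RealInnerProductSpace in
lemma key_bound {E : Type*} [NormedAddCommGroup E] [InnerProductSpace ℝ E]
    (n w : ℕ) (hn : 2 ≤ n) (hw1 : 1 ≤ w) (hwn : w ≤ n)
    (W : Fin n → E) (hsum : ∑ j, W j = 0) (M : ℝ) (hM : ∀ j, ‖W j‖ ^ 2 ≤ M) :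
    ∑ S ∈ Finset.powersetCard w (Finset.univ : Finset (Fin n)), ‖∑ j ∈ S, W j‖ ^ 2
      ≤ ((n - 1).choose (w - 1) : ℝ) * (n * M) := by
  classical
  set P := Finset.powersetCard w (Finset.univ : Finset (Fin n)) with hP
  set N1 : ℕ := (n - 1).choose (w - 1) with hN1
  set N2 : ℕ := if 2 ≤ w then (n - 2).choose (w - 2) else 0 with hN2
  have hMnn : 0 ≤ M := le_trans (by positivity) (hM ⟨0, by omega⟩)
  -- counting
  have hcount1 : ∀ i : Fin n, (P.filter (fun S => i ∈ S)).card = N1 := by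
    intro i
    have := count_supersets (Finset.univ : Finset (Fin n)) {i} w (by simp)
      (by simpa using hw1)
    simpa using this
  have hcount2 : ∀ i j : Fin n, i ≠ j →
      (P.filter (fun S => i ∈ S ∧ j ∈ S)).card = N2 := by
    intro i j hij
    by_cases hw2 : 2 ≤ w
    · have hc : ({i, j} : Finset (Fin n)).card = 2 := Finset.card_pair hij
      have h := count_supersets (Finset.univ : Finset (Fin n)) {i, j} w (by simp)
        (by omega)
      rw [hc, Finset.card_univ, Fintype.card_fin] at h
      rw [hN2, if_pos hw2, ← h]
      congr 1
      apply Finset.filter_congr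
      intro S _
      simp [Finset.insert_subset_iff]
    · have hw : w = 1 := by omega
      rw [hN2, if_neg hw2]
      rw [Finset.card_eq_zero, Finset.filter_eq_empty_iff]
      intro S hS
      rw [hP, Finset.mem_powersetCard] at hS
      rintro ⟨hiS, hjS⟩
      have : ({i, j} : Finset (Fin n)).card ≤ S.card :=
        Finset.card_le_card (by simp [Finset.insert_subset_iff, hiS, hjS])
      rw [Finset.card_pair hij, hS.2, hw] at this
      omega
  have h1 : ∀ (T : Finset (Fin n)) (f : Fin n → ℝ),
      ∑ j ∈ T, f j = ∑ j, if j ∈ T then f j else 0 := by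
    intro T f
    rw [Finset.sum_ite_mem, Finset.univ_inter]
  -- expand norms into inner products
  have expand : ∀ S : Finset (Fin n), ‖∑ j ∈ S, W j‖ ^ 2
      = ∑ i ∈ S, ∑ j ∈ S, ⟪W i, W j⟫ := by
    intro S
    rw [← real_inner_self_eq_norm_sq, sum_inner]
    exact Finset.sum_congr rfl fun i _ => inner_sum _ _ _
  have hz : ∑ i, ∑ j, ⟪W i, W j⟫ = 0 := by
    have h : ∑ i, ∑ j, ⟪W i, W j⟫ = ⟪∑ i, W i, ∑ j, W j⟫ := by
      rw [sum_inner]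
      exact Finset.sum_congr rfl fun i _ => (inner_sum _ _ _).symm
    rw [h, hsum, inner_zero_left]
  have hWnn : (0:ℝ) ≤ ∑ i, ‖W i‖ ^ 2 := Finset.sum_nonneg fun i _ => by positivity
  have hWle : ∑ i : Fin n, ‖W i‖ ^ 2 ≤ n * M := by
    calc ∑ i : Fin n, ‖W i‖ ^ 2 ≤ ∑ _i : Fin n, M := Finset.sum_le_sum fun i _ => hM i
    _ = n * M := by rw [Finset.sum_const, Finset.card_univ, Fintype.card_fin, nsmul_eq_mul]
  calc ∑ S ∈ P, ‖∑ j ∈ S, W j‖ ^ 2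
      = ∑ S ∈ P, ∑ i, ∑ j, (if i ∈ S ∧ j ∈ S then ⟪W i, W j⟫ else 0) := by
        refine Finset.sum_congr rfl fun S _ => ?_
        rw [expand, h1 S]
        refine Finset.sum_congr rfl fun i _ => ?_
        by_cases hi : i ∈ S
        · simp only [hi, if_true, true_and]
          exact h1 S _
        · simp [hi]
    _ = ∑ i, ∑ j, ((P.filter (fun S => i ∈ S ∧ j ∈ S)).card : ℝ) * ⟪W i, W j⟫ := by
        rw [Finset.sum_comm]
        refine Finset.sum_congr rfl fun i _ => ?_
        rw [Finset.sum_comm]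
        refine Finset.sum_congr rfl fun j _ => ?_
        rw [← Finset.sum_filter, Finset.sum_const, nsmul_eq_mul]
    _ = ∑ i, ∑ j, ((if i = j then (N1:ℝ) else (N2:ℝ)) * ⟪W i, W j⟫) := by
        refine Finset.sum_congr rfl fun i _ => Finset.sum_congr rfl fun j _ => ?_
        congr 1
        by_cases hij : i = j
        · subst hij
          rw [if_pos rfl, ← hcount1 i]
          norm_cast
          congr 1
          apply Finset.filter_congr
          intro S _
          simp
        · rw [if_neg hij, ← hcount2 i j hij]
    _ = (N2:ℝ) * ∑ i, ∑ j, ⟪W i, W j⟫ + ((N1:ℝ) - (N2:ℝ)) * ∑ i, ‖W i‖ ^ 2 := by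
        have hsplit : ∀ i j : Fin n, (if i = j then (N1:ℝ) else (N2:ℝ)) * ⟪W i, W j⟫
            = (N2:ℝ) * ⟪W i, W j⟫
              + (if i = j then ((N1:ℝ) - (N2:ℝ)) * ⟪W i, W j⟫ else 0) := by
          intro i j
          split_ifs <;> ring
        simp_rw [hsplit, Finset.sum_add_distrib]
        congr 1
        · rw [Finset.mul_sum]
          exact Finset.sum_congr rfl fun i _ => (Finset.mul_sum _ _ _).symm
        · rw [Finset.mul_sum]
          refine Finset.sum_congr rfl fun i _ => ?_
          rw [Finset.sum_ite_eq univ i, if_pos (Finset.mem_univ i),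
            real_inner_self_eq_norm_sq]
    _ ≤ (N1:ℝ) * (n * M) := by
        rw [hz, mul_zero, zero_add]
        have hN2nn : (0:ℝ) ≤ (N2:ℝ) := Nat.cast_nonneg _
        nlinarith [mul_le_mul_of_nonneg_left hWle (Nat.cast_nonneg (α := ℝ) N1),
          mul_nonneg hN2nn hWnn]

/-- Variance bound for stochastic attention under uniform weights: if `‖V j‖ ≤ B` for all
`j`, `S` is a uniformly random `w`-element subset of `Fin n` (`1 ≤ w ≤ n`, `n ≥ 2`), and
`X = (1/w)·∑_{j ∈ S} V j`, then `E[‖X − V̄‖²] ≤ 4B²/w`. -/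
theorem sampling_without_replacement_variance_bound (n w d : ℕ) (hn : 2 ≤ n)
    (hw1 : 1 ≤ w) (hwn : w ≤ n) (B : ℝ) (V : Fin n → EuclideanSpace ℝ (Fin d))
    (hV : ∀ j, ‖V j‖ ≤ B)
    (Vbar : EuclideanSpace ℝ (Fin d)) (hVbar : Vbar = (n : ℝ)⁻¹ • ∑ j, V j)
    (X : Finset (Fin n) → EuclideanSpace ℝ (Fin d))
    (hX : ∀ S, X S = (w : ℝ)⁻¹ • ∑ j ∈ S, V j) :
    (n.choose w : ℝ)⁻¹ *
        (∑ S ∈ Finset.powersetCard w (Finset.univ : Finset (Fin n)), ‖X S - Vbar‖ ^ 2)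
      ≤ 4 * B ^ 2 / (w : ℝ) := by
  classical
  have hn0 : (n:ℝ) ≠ 0 := Nat.cast_ne_zero.2 (by omega)
  have hw0 : (w:ℝ) ≠ 0 := Nat.cast_ne_zero.2 (by omega)
  have hB : 0 ≤ B := le_trans (norm_nonneg _) (hV ⟨0, by omega⟩)
  set W : Fin n → EuclideanSpace ℝ (Fin d) := fun j => V j - Vbar with hWdef
  have hWsum : ∑ j, W j = 0 := by
    simp only [hWdef, Finset.sum_sub_distrib]
    rw [sub_eq_zero, hVbar, Finset.sum_const, Finset.card_univ, Fintype.card_fin,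
      ← Nat.cast_smul_eq_nsmul ℝ, smul_smul, mul_inv_cancel₀ hn0, one_smul]
  have hVbarnorm : ‖Vbar‖ ≤ B := by
    rw [hVbar, norm_smul, norm_inv, Real.norm_natCast]
    have h1 : ‖∑ j, V j‖ ≤ (n:ℝ) * B := by
      calc ‖∑ j, V j‖ ≤ ∑ j, ‖V j‖ := norm_sum_le _ _
        _ ≤ ∑ _j : Fin n, B := Finset.sum_le_sum fun j _ => hV j
        _ = (n:ℝ) * B := by
            rw [Finset.sum_const, Finset.card_univ, Fintype.card_fin, nsmul_eq_mul]
    calc (n:ℝ)⁻¹ * ‖∑ j, V j‖ ≤ (n:ℝ)⁻¹ * ((n:ℝ) * B) := by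
          apply mul_le_mul_of_nonneg_left h1 (by positivity)
      _ = B := by field_simp
  have hWnorm : ∀ j, ‖W j‖ ^ 2 ≤ (2 * B) ^ 2 := by
    intro j
    have h : ‖W j‖ ≤ 2 * B := by
      calc ‖V j - Vbar‖ ≤ ‖V j‖ + ‖Vbar‖ := norm_sub_le _ _
        _ ≤ 2 * B := by linarith [hV j]
    exact pow_le_pow_left₀ (norm_nonneg _) h 2
  have hXW : ∀ S ∈ Finset.powersetCard w (Finset.univ : Finset (Fin n)),
      ‖X S - Vbar‖ ^ 2 = ((w:ℝ)⁻¹) ^ 2 * ‖∑ j ∈ S, W j‖ ^ 2 := by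
    intro S hS
    rw [Finset.mem_powersetCard] at hS
    have hdiff : X S - Vbar = (w:ℝ)⁻¹ • ∑ j ∈ S, W j := by
      simp only [hWdef, Finset.sum_sub_distrib, smul_sub, Finset.sum_const]
      rw [hS.2, ← Nat.cast_smul_eq_nsmul ℝ, smul_smul, inv_mul_cancel₀ hw0, one_smul,
        hX S]
    rw [hdiff, norm_smul, norm_inv, Real.norm_natCast, mul_pow]
  have hkey := key_bound n w hn hw1 hwn W hWsum ((2 * B) ^ 2) hWnorm
  have hC0 : (0:ℝ) < (n.choose w : ℝ) := by exact_mod_cast Nat.choose_pos hwn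
  have hid : ((n - 1).choose (w - 1) : ℝ) * (n:ℝ) = (n.choose w : ℝ) * (w:ℝ) := by
    have h : n * (n - 1).choose (w - 1) = n.choose w * w := by
      have h1 : n - 1 + 1 = n := by omega
      have h2 : w - 1 + 1 = w := by omega
      have h3 := Nat.add_one_mul_choose_eq (n - 1) (w - 1)
      rw [h1, h2] at h3
      exact h3
    have := congrArg (Nat.cast (R := ℝ)) h
    push_cast at this
    linarith
  calc (n.choose w : ℝ)⁻¹ *
        (∑ S ∈ Finset.powersetCard w (Finset.univ : Finset (Fin n)), ‖X S - Vbar‖ ^ 2)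
      = (n.choose w : ℝ)⁻¹ * (((w:ℝ)⁻¹) ^ 2 *
          ∑ S ∈ Finset.powersetCard w (Finset.univ : Finset (Fin n)), ‖∑ j ∈ S, W j‖ ^ 2) := by
        congr 1
        rw [Finset.sum_congr rfl hXW, ← Finset.mul_sum]
    _ ≤ (n.choose w : ℝ)⁻¹ * (((w:ℝ)⁻¹) ^ 2 *
          (((n - 1).choose (w - 1) : ℝ) * ((n:ℝ) * (2 * B) ^ 2))) := by
        apply mul_le_mul_of_nonneg_left _ (by positivity)
        apply mul_le_mul_of_nonneg_left hkey (by positivity)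
    _ = 4 * B ^ 2 / (w : ℝ) := by
        have : (((n - 1).choose (w - 1) : ℝ) * (n:ℝ)) * ((2 * B) ^ 2)
            * ((n.choose w : ℝ)⁻¹ * ((w:ℝ)⁻¹) ^ 2)
            = (n.choose w : ℝ)⁻¹ * (((w:ℝ)⁻¹) ^ 2 *
              (((n - 1).choose (w - 1) : ℝ) * ((n:ℝ) * (2 * B) ^ 2))) := by ring
        rw [← this, hid]
        field_simp
        ring
end

section
/- Let n ≥ 2 and 2 ≤ w ≤ n be integers, fix i ∈ Fin n, let V : Fin n → ℝ^d satisfy ‖V_j‖ ≤ B for all j, and let V̄ = (1/n)·Σ_{j} V_j. Let S' be a subset of Fin n \ {i} of cardinality w − 1 drawn uniformly at random among all (w − 1)-element subsets of Fin n \ {i}, and let X = (1/w)·(V_i + Σ_{j ∈ S'} V_j). Then E[X] = (1/w)·V_i + ((w − 1)/(w·(n − 1)))·Σ_{j ≠ i} V_j, and ‖E[X] − V̄‖ ≤ 2B/w. -/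
open Finset

lemma card_filter_mem_powersetCard {α : Type*} [DecidableEq α] (s : Finset α) {j : α}
    (hj : j ∈ s) (k : ℕ) :
    ((s.powersetCard (k+1)).filter (fun t => j ∈ t)).card = (s.erase j).card.choose k := by
  rw [← Finset.card_powersetCard k (s.erase j)]
  apply Finset.card_nbij' (fun t => t.erase j) (fun u => insert j u)
  · intro t ht
    simp only [mem_coe, mem_filter, mem_powersetCard] at ht
    obtain ⟨⟨hsub, hcard⟩, hjt⟩ := ht
    rw [mem_coe, mem_powersetCard]
    exact ⟨erase_subset_erase _ hsub, by rw [card_erase_of_mem hjt, hcard]; rfl⟩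
  · intro u hu
    rw [mem_coe, mem_powersetCard] at hu
    obtain ⟨hsub, hcard⟩ := hu
    have hju : j ∉ u := fun h => (mem_erase.1 (hsub h)).1 rfl
    simp only [mem_coe, mem_filter, mem_powersetCard]
    refine ⟨⟨insert_subset hj (hsub.trans (erase_subset _ _)), ?_⟩, mem_insert_self _ _⟩
    rw [card_insert_of_notMem hju, hcard]
  · intro t ht
    simp only [mem_coe, mem_filter] at ht
    exact insert_erase ht.2
  · intro u hu
    rw [mem_coe, mem_powersetCard] at hu
    have hju : j ∉ u := fun h => (mem_erase.1 (hu.1 h)).1 rfl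
    exact erase_insert hju

lemma sum_powersetCard_sum {α M : Type*} [DecidableEq α] [AddCommMonoid M] (s : Finset α)
    (k : ℕ) (f : α → M) :
    ∑ t ∈ s.powersetCard (k+1), ∑ j ∈ t, f j
      = ∑ j ∈ s, (s.erase j).card.choose k • f j := by
  have h : ∀ t ∈ s.powersetCard (k+1), ∑ j ∈ t, f j = ∑ j ∈ s, if j ∈ t then f j else 0 := by
    intro t ht
    rw [Finset.sum_ite_mem, Finset.inter_eq_right.mpr (Finset.mem_powersetCard.1 ht).1]
  rw [Finset.sum_congr rfl h, Finset.sum_comm]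
  refine Finset.sum_congr rfl fun j hj => ?_
  rw [← Finset.sum_filter, Finset.sum_const, card_filter_mem_powersetCard s hj k]

set_option maxHeartbeats 1000000 in
/-- Bias of stochastic attention under uniform weights: token `i` always lies in its own
window, and the remaining `w − 1` window members `S'` form a uniformly random
`(w − 1)`-element subset of `Fin n \ {i}`. With `X = (1/w)·(V i + ∑_{j ∈ S'} V j)`,
the expectation of `X` equals `(1/w)·V i + ((w − 1)/(w·(n − 1)))·∑_{j ≠ i} V j`, and its
distance from the uniform full-attention output `V̄` is at most `2B/w`. -/
theorem stochastic_attention_bias (n w d : ℕ) (hn : 2 ≤ n) (hw2 : 2 ≤ w) (hwn : w ≤ n)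
    (i : Fin n) (B : ℝ) (V : Fin n → EuclideanSpace ℝ (Fin d)) (hV : ∀ j, ‖V j‖ ≤ B)
    (Vbar : EuclideanSpace ℝ (Fin d)) (hVbar : Vbar = (n : ℝ)⁻¹ • ∑ j, V j)
    (X : Finset (Fin n) → EuclideanSpace ℝ (Fin d))
    (hX : ∀ S', X S' = (w : ℝ)⁻¹ • (V i + ∑ j ∈ S', V j))
    (EX : EuclideanSpace ℝ (Fin d))
    (hEX : EX = ((n - 1).choose (w - 1) : ℝ)⁻¹ •
        ∑ S' ∈ Finset.powersetCard (w - 1) ((Finset.univ : Finset (Fin n)).erase i), X S') :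
    EX = (1 / (w : ℝ)) • V i
        + (((w : ℝ) - 1) / ((w : ℝ) * ((n : ℝ) - 1))) •
            ∑ j ∈ (Finset.univ : Finset (Fin n)).erase i, V j
    ∧ ‖EX - Vbar‖ ≤ 2 * B / (w : ℝ) := by
  set s : Finset (Fin n) := (Finset.univ : Finset (Fin n)).erase i with hs
  have hscard : s.card = n - 1 := by
    rw [hs, card_erase_of_mem (mem_univ i), card_univ, Fintype.card_fin]
  set T : EuclideanSpace ℝ (Fin d) := ∑ j ∈ s, V j with hT
  set C : ℕ := (n - 1).choose (w - 1) with hC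
  set D : ℕ := (n - 2).choose (w - 2) with hD
  have hw1 : w - 1 = (w - 2) + 1 := by omega
  have hsum : ∑ t ∈ s.powersetCard (w - 1), ∑ j ∈ t, V j = (D : ℝ) • T := by
    rw [hw1, sum_powersetCard_sum]
    have : ∀ j ∈ s, (s.erase j).card.choose (w - 2) • V j = (D : ℝ) • V j := by
      intro j hj
      rw [card_erase_of_mem hj, hscard, (show n - 1 - 1 = n - 2 by omega),
        Nat.cast_smul_eq_nsmul ℝ]
    rw [Finset.sum_congr rfl this, ← Finset.smul_sum]
  have hcardP : (s.powersetCard (w - 1)).card = C := by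
    rw [Finset.card_powersetCard, hscard]
  have hCpos : 0 < C := Nat.choose_pos (by omega)
  have hCne : (C : ℝ) ≠ 0 := Nat.cast_ne_zero.2 hCpos.ne'
  have hwne : (w : ℝ) ≠ 0 := Nat.cast_ne_zero.2 (by omega)
  have hn1 : ((n : ℝ) - 1) ≠ 0 := by
    have : (2 : ℝ) ≤ (n : ℝ) := by exact_mod_cast hn
    linarith
  -- key choose identity
  have hchoose : ((n : ℝ) - 1) * (D : ℝ) = (C : ℝ) * ((w : ℝ) - 1) := by
    have h1 : (n - 1) * D = C * (w - 1) := by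
      rw [hC, hD, (by omega : n - 1 = (n - 2) + 1), (by omega : w - 1 = (w - 2) + 1)]
      exact Nat.add_one_mul_choose_eq (n - 2) (w - 2)
    have h2 : ((n : ℝ) - 1) = ((n - 1 : ℕ) : ℝ) := by
      push_cast [Nat.cast_sub (by omega : 1 ≤ n)]; ring
    have h3 : ((w : ℝ) - 1) = ((w - 1 : ℕ) : ℝ) := by
      push_cast [Nat.cast_sub (by omega : 1 ≤ w)]; ring
    rw [h2, h3, ← Nat.cast_mul, ← Nat.cast_mul, h1]
  have h1 : ∑ S' ∈ s.powersetCard (w - 1), X S'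
      = (w : ℝ)⁻¹ • ((C : ℝ) • V i + (D : ℝ) • T) := by
    simp_rw [hX]
    rw [← Finset.smul_sum, Finset.sum_add_distrib, Finset.sum_const, hsum, hcardP]
    simp [Nat.cast_smul_eq_nsmul]
  have hmain : EX = (1 / (w : ℝ)) • V i
      + (((w : ℝ) - 1) / ((w : ℝ) * ((n : ℝ) - 1))) • T := by
    rw [hEX, h1]
    match_scalars
    · field_simp
    · field_simp
      linear_combination hchoose
  refine ⟨hmain, ?_⟩
  have hB : 0 ≤ B := le_trans (norm_nonneg _) (hV i)
  have hTn : ‖T‖ ≤ ((n : ℝ) - 1) * B := by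
    calc ‖T‖ ≤ ∑ j ∈ s, ‖V j‖ := norm_sum_le _ _
    _ ≤ ∑ j ∈ s, B := Finset.sum_le_sum fun j _ => hV j
    _ = ((n : ℝ) - 1) * B := by
        rw [Finset.sum_const, hscard, nsmul_eq_mul, Nat.cast_sub (by omega : 1 ≤ n)]
        norm_num
  have hN2 : (2 : ℝ) ≤ (n : ℝ) := by exact_mod_cast hn
  have hW2 : (2 : ℝ) ≤ (w : ℝ) := by exact_mod_cast hw2
  have hWN : (w : ℝ) ≤ (n : ℝ) := by exact_mod_cast hwn
  have hsplit : EX - Vbar = ((1 : ℝ) / w - (n : ℝ)⁻¹) • V i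
      + (((w : ℝ) - 1) / ((w : ℝ) * ((n : ℝ) - 1)) - (n : ℝ)⁻¹) • T := by
    rw [hmain, hVbar, ← Finset.add_sum_erase _ V (mem_univ i), ← hs, ← hT]
    module
  rw [hsplit]
  set a : ℝ := (1 : ℝ) / w - (n : ℝ)⁻¹ with ha
  set b : ℝ := ((w : ℝ) - 1) / ((w : ℝ) * ((n : ℝ) - 1)) - (n : ℝ)⁻¹ with hb
  have hanon : 0 ≤ a := by
    rw [ha, sub_nonneg, one_div]
    exact inv_anti₀ (by linarith) hWN
  have hbnon : b ≤ 0 := by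
    rw [hb, sub_nonpos, div_le_iff₀ (by nlinarith)]
    rw [inv_mul_eq_div, le_div_iff₀ (by linarith)]
    nlinarith
  have hwpos : (0 : ℝ) < w := by linarith
  have hnpos : (0 : ℝ) < n := by linarith
  have key : a * B + (-b) * (((n : ℝ) - 1) * B)
      = (2 * ((n : ℝ) - w) / ((w : ℝ) * n)) * B := by
    rw [ha, hb]; field_simp; ring
  calc ‖a • V i + b • T‖ ≤ ‖a • V i‖ + ‖b • T‖ := norm_add_le _ _
    _ = |a| * ‖V i‖ + |b| * ‖T‖ := by rw [norm_smul, norm_smul, Real.norm_eq_abs, Real.norm_eq_abs]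
    _ ≤ a * B + (-b) * (((n : ℝ) - 1) * B) := by
        rw [abs_of_nonneg hanon, abs_of_nonpos hbnon]
        gcongr
        · exact hV i
        · linarith
    _ = (2 * ((n : ℝ) - w) / ((w : ℝ) * n)) * B := key
    _ ≤ 2 * B / w := by
        rw [div_mul_eq_mul_div, div_le_div_iff₀ (by positivity) hwpos]
        nlinarith [mul_nonneg hB hwpos.le, mul_nonneg (mul_nonneg hB hwpos.le) hwpos.le]
end

section
/- Let n ≥ 2 and h ≥ 1 be integers with w = 2h + 1 ≤ n, and let A be the n × n complex matrix with A_{i j} = 1 if |i − j|_n ≤ h and A_{i j} = 0 otherwise. Then the vector v ∈ ℂ^n with v_j = exp(2πi·j/n) satisfies ((1/w)·A)·v = λ·v, where λ = (1/w)·Σ_{t = −h}^{h} cos(2π t/n) is real, and moreover λ ≥ 1 − (2π²/3)·h·(h + 1)/n². -/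
open Real

/-- The vertex at circular offset `t` from position `a`. -/
def circVert (n : ℕ) (hn : 0 < n) (a t : ℤ) : Fin n :=
  ⟨((a + t) % n).toNat, by
    have h1 := Int.emod_lt_of_pos (a + t) (by exact_mod_cast hn : (0:ℤ) < n)
    have h2 := Int.emod_nonneg (a + t) (by exact_mod_cast hn.ne' : (n:ℤ) ≠ 0)
    omega⟩

lemma circVert_val (n : ℕ) (hn : 0 < n) (a t : ℤ) :
    ((circVert n hn a t).val : ℤ) = (a + t) % n := by
  have h2 := Int.emod_nonneg (a + t) (by exact_mod_cast hn.ne' : (n:ℤ) ≠ 0)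
  simpa [circVert] using Int.toNat_of_nonneg h2

lemma sumSq (h : ℕ) : (∑ t ∈ Finset.Icc (-(h:ℤ)) (h:ℤ), t^2) * 3
    = (h:ℤ)*((h:ℤ)+1)*(2*(h:ℤ)+1) := by
  induction h with
  | zero => simp
  | succ m ih =>
    have hset : Finset.Icc (-((m:ℤ)+1)) ((m:ℤ)+1) =
        insert (-((m:ℤ)+1)) (insert ((m:ℤ)+1) (Finset.Icc (-(m:ℤ)) (m:ℤ))) := by
      ext x; simp only [Finset.mem_Icc, Finset.mem_insert]; omega
    have h1 : (-((m:ℤ)+1)) ∉ insert ((m:ℤ)+1) (Finset.Icc (-(m:ℤ)) (m:ℤ)) := by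
      simp only [Finset.mem_insert, Finset.mem_Icc]; omega
    have h2 : ((m:ℤ)+1) ∉ Finset.Icc (-(m:ℤ)) (m:ℤ) := by
      simp only [Finset.mem_Icc]; omega
    push_cast
    rw [hset, Finset.sum_insert h1, Finset.sum_insert h2]
    push_cast at ih
    linear_combination ih

/-- Spectral gap of the sliding-window transition matrix: for the circulant adjacency
matrix `A` of the window graph (`A i j = 1` iff `|i − j|_n ≤ h`, with `w = 2h + 1 ≤ n`),
the vector `v j = exp(2πi·j/n)` is an eigenvector of `(1/w)·A` with real eigenvalue
`λ = (1/w)·∑_{t = −h}^{h} cos(2πt/n)`, and `λ ≥ 1 − (2π²/3)·h·(h + 1)/n²`. -/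
theorem swa_spectral_gap (n h : ℕ) (hn : 2 ≤ n) (hh : 1 ≤ h) (w : ℕ)
    (hw : w = 2 * h + 1) (hwn : w ≤ n)
    (A : Matrix (Fin n) (Fin n) ℂ)
    (hA : ∀ i j, A i j = if circDist n i j ≤ h then 1 else 0)
    (v : Fin n → ℂ)
    (hv : ∀ j, v j = Complex.exp (2 * (π : ℂ) * Complex.I * (j : ℕ) / (n : ℕ)))
    (lam : ℝ)
    (hlam : lam = (1 / (w : ℝ)) * ∑ t ∈ Finset.Icc (-(h : ℤ)) (h : ℤ),
        Real.cos (2 * π * (t : ℝ) / (n : ℝ))) :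
    ((w : ℂ)⁻¹ • A).mulVec v = (lam : ℂ) • v
    ∧ lam ≥ 1 - (2 * π ^ 2 / 3) * (h : ℝ) * ((h : ℝ) + 1) / (n : ℝ) ^ 2 := by
  have hn0 : 0 < n := by omega
  have hnZ : (0:ℤ) < n := by exact_mod_cast hn0
  have hnC : ((n:ℕ):ℂ) ≠ 0 := by exact_mod_cast hn0.ne'
  have hnR : (0:ℝ) < n := by exact_mod_cast hn0
  -- L2 : the complex exponential sum is real, equal to the cosine sum
  have hsin : ∑ t ∈ Finset.Icc (-(h:ℤ)) (h:ℤ), Real.sin (2 * π * (t:ℝ) / (n:ℝ)) = 0 := by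
    refine Finset.sum_involution (fun a _ => -a) ?_ ?_ ?_ ?_
    · intro a _
      have : 2 * π * ((-a : ℤ):ℝ) / (n:ℝ) = -(2 * π * (a:ℝ) / (n:ℝ)) := by push_cast; ring
      rw [this, Real.sin_neg]; ring
    · intro a _ hfa hcon
      apply hfa
      have hcon' : -a = a := hcon
      have ha : a = 0 := by omega
      simp [ha]
    · intro a ha; simp only [Finset.mem_Icc] at ha ⊢; omega
    · intro a _; ring
  have L2 : ∑ t ∈ Finset.Icc (-(h:ℤ)) (h:ℤ),
      Complex.exp (2 * (π:ℂ) * Complex.I * (t:ℤ) / (n:ℕ))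
      = ((∑ t ∈ Finset.Icc (-(h:ℤ)) (h:ℤ), Real.cos (2 * π * (t:ℝ) / (n:ℝ)) : ℝ) : ℂ) := by
    have hterm : ∀ t : ℤ, Complex.exp (2 * (π:ℂ) * Complex.I * (t:ℤ) / (n:ℕ))
        = ((Real.cos (2 * π * (t:ℝ) / (n:ℝ)) : ℝ) : ℂ)
          + ((Real.sin (2 * π * (t:ℝ) / (n:ℝ)) : ℝ) : ℂ) * Complex.I := by
      intro t
      have harg : 2 * (π:ℂ) * Complex.I * (t:ℤ) / (n:ℕ)
          = ((2 * π * (t:ℝ) / (n:ℝ) : ℝ) : ℂ) * Complex.I := by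
        push_cast; field_simp
      rw [harg, Complex.exp_mul_I, ← Complex.ofReal_cos, ← Complex.ofReal_sin]
    simp only [hterm]
    rw [Finset.sum_add_distrib, ← Finset.sum_mul, ← Complex.ofReal_sum, ← Complex.ofReal_sum,
      hsin]
    simp
  -- L1 : eigenvector computation
  have eig : ∀ i : Fin n, ∑ j, A i j * v j
      = v i * ∑ t ∈ Finset.Icc (-(h:ℤ)) (h:ℤ),
          Complex.exp (2 * (π:ℂ) * Complex.I * (t:ℤ) / (n:ℕ)) := by
    intro i
    have hiZ : ((i.val : ℤ)) < n := by exact_mod_cast i.isLt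
    have hi0 : (0:ℤ) ≤ (i.val : ℤ) := Int.natCast_nonneg _
    -- representation lemma
    have hrep : ∀ t : ℤ, -(h:ℤ) ≤ t → t ≤ h →
        ((circVert n hn0 (i.val : ℤ) t).val : ℤ) = (i.val : ℤ) + t
        ∨ ((circVert n hn0 (i.val : ℤ) t).val : ℤ) = (i.val : ℤ) + t + n
        ∨ ((circVert n hn0 (i.val : ℤ) t).val : ℤ) = (i.val : ℤ) + t - n := by
      intro t ht1 ht2
      rw [circVert_val]
      by_cases hc1 : (i.val : ℤ) + t < 0
      · right; left
        have e : (i.val : ℤ) + t = ((i.val : ℤ) + t + n) + (n:ℤ) * (-1) := by ring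
        conv_lhs => rw [e, Int.add_mul_emod_self_left]
        rw [Int.emod_eq_of_lt (by omega) (by omega)]
      by_cases hc2 : (i.val : ℤ) + t < n
      · left; rw [Int.emod_eq_of_lt (by omega) (by omega)]
      · right; right
        have e : (i.val : ℤ) + t = ((i.val : ℤ) + t - n) + (n:ℤ) * 1 := by ring
        conv_lhs => rw [e, Int.add_mul_emod_self_left]
        rw [Int.emod_eq_of_lt (by omega) (by omega)]
    have hfin : ∀ t : ℤ, ((circVert n hn0 (i.val : ℤ) t).val : ℤ) < n := by
      intro t; exact_mod_cast (circVert n hn0 (i.val : ℤ) t).isLt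
    calc ∑ j, A i j * v j
        = ∑ j ∈ Finset.univ.filter (fun j => circDist n i j ≤ h), v j := by
          rw [Finset.sum_filter]
          apply Finset.sum_congr rfl
          intro j _
          rw [hA]
          by_cases hd : circDist n i j ≤ h <;> simp [hd]
      _ = ∑ t ∈ Finset.Icc (-(h:ℤ)) (h:ℤ),
            (v i * Complex.exp (2 * (π:ℂ) * Complex.I * (t:ℤ) / (n:ℕ))) := by
          refine (Finset.sum_bij (fun t _ => circVert n hn0 (i.val : ℤ) t) ?_ ?_ ?_ ?_).symm
          · -- membership
            intro t ht
            simp only [Finset.mem_Icc] at ht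
            simp only [Finset.mem_filter, Finset.mem_univ, true_and]
            rcases hrep t ht.1 ht.2 with hr | hr | hr <;>
            · have := hfin t
              unfold circDist
              omega
          · -- injectivity
            intro t1 ht1 t2 ht2 heq
            simp only [Finset.mem_Icc] at ht1 ht2
            have heq' : circVert n hn0 (i.val : ℤ) t1 = circVert n hn0 (i.val : ℤ) t2 := heq
            have hval : ((circVert n hn0 (i.val : ℤ) t1).val : ℤ)
                = ((circVert n hn0 (i.val : ℤ) t2).val : ℤ) := by rw [heq']
            rcases hrep t1 ht1.1 ht1.2 with h1 | h1 | h1 <;>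
              rcases hrep t2 ht2.1 ht2.2 with h2 | h2 | h2 <;> omega
          · -- surjectivity
            intro j hj
            simp only [Finset.mem_filter, Finset.mem_univ, true_and] at hj
            unfold circDist at hj
            have hjZ : ((j.val : ℤ)) < n := by exact_mod_cast j.isLt
            have hj0 : (0:ℤ) ≤ (j.val : ℤ) := Int.natCast_nonneg _
            have hmk : ∀ t : ℤ, ((i.val : ℤ) + t) % n = (j.val : ℤ) →
                circVert n hn0 (i.val : ℤ) t = j := by
              intro t hmod
              have := circVert_val n hn0 (i.val : ℤ) t
              rw [hmod] at this
              exact Fin.ext (by exact_mod_cast this)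
            by_cases hc1 : -(h:ℤ) ≤ (j.val : ℤ) - (i.val : ℤ) ∧ (j.val : ℤ) - (i.val : ℤ) ≤ h
            · refine ⟨(j.val : ℤ) - (i.val : ℤ), Finset.mem_Icc.mpr ⟨hc1.1, hc1.2⟩, hmk _ ?_⟩
              rw [show (i.val : ℤ) + ((j.val : ℤ) - (i.val : ℤ)) = (j.val : ℤ) by ring,
                Int.emod_eq_of_lt hj0 hjZ]
            by_cases hc2 : (h:ℤ) < (j.val : ℤ) - (i.val : ℤ)
            · refine ⟨(j.val : ℤ) - (i.val : ℤ) - n, Finset.mem_Icc.mpr ⟨by omega, by omega⟩,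
                hmk _ ?_⟩
              rw [show (i.val : ℤ) + ((j.val : ℤ) - (i.val : ℤ) - n)
                  = (j.val : ℤ) + n * (-1) by ring, Int.add_mul_emod_self_left,
                Int.emod_eq_of_lt hj0 hjZ]
            · refine ⟨(j.val : ℤ) - (i.val : ℤ) + n, Finset.mem_Icc.mpr ⟨by omega, by omega⟩,
                hmk _ ?_⟩
              rw [show (i.val : ℤ) + ((j.val : ℤ) - (i.val : ℤ) + n)
                  = (j.val : ℤ) + n * 1 by ring, Int.add_mul_emod_self_left,
                Int.emod_eq_of_lt hj0 hjZ]
          · -- values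
            intro t ht
            simp only [Finset.mem_Icc] at ht
            rw [hv, hv]
            have key : ∀ k : ℤ, ((circVert n hn0 (i.val : ℤ) t).val : ℤ)
                = (i.val : ℤ) + t + k * n →
                Complex.exp (2 * (π:ℂ) * Complex.I * ((i.val : ℕ):ℂ) / (n:ℕ))
                  * Complex.exp (2 * (π:ℂ) * Complex.I * (t:ℤ) / (n:ℕ))
                = Complex.exp (2 * (π:ℂ) * Complex.I
                    * (((circVert n hn0 (i.val : ℤ) t).val : ℕ):ℂ) / (n:ℕ)) := by
              intro k hk
              have hcast : (((circVert n hn0 (i.val : ℤ) t).val : ℕ):ℂ)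
                  = ((i.val : ℕ):ℂ) + (t:ℤ) + ((k:ℤ):ℂ) * (n:ℕ) := by
                exact_mod_cast congrArg (fun z : ℤ => (z:ℂ)) hk
              rw [hcast]
              rw [show 2 * (π:ℂ) * Complex.I * (((i.val : ℕ):ℂ) + (t:ℤ) + ((k:ℤ):ℂ) * (n:ℕ))
                  / (n:ℕ) = 2 * (π:ℂ) * Complex.I * ((i.val : ℕ):ℂ) / (n:ℕ)
                  + 2 * (π:ℂ) * Complex.I * (t:ℤ) / (n:ℕ)
                  + ((k:ℤ):ℂ) * (2 * (π:ℂ) * Complex.I) by field_simp]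
              rw [Complex.exp_add, Complex.exp_add, Complex.exp_int_mul_two_pi_mul_I, mul_one]
            rcases hrep t ht.1 ht.2 with hr | hr | hr
            · exact key 0 (by omega)
            · exact key 1 (by omega)
            · exact key (-1) (by omega)
      _ = v i * ∑ t ∈ Finset.Icc (-(h:ℤ)) (h:ℤ),
            Complex.exp (2 * (π:ℂ) * Complex.I * (t:ℤ) / (n:ℕ)) := by
          rw [Finset.mul_sum]
  constructor
  · funext p
    rw [Matrix.smul_mulVec]
    simp only [Pi.smul_apply, smul_eq_mul]
    have : A.mulVec v p = ∑ j, A p j * v j := by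
      simp [Matrix.mulVec, dotProduct]
    rw [this, eig p, L2, hlam]
    push_cast
    have hwC : ((w:ℕ):ℂ) ≠ 0 := by
      have : (0:ℕ) < w := by omega
      exact_mod_cast this.ne'
    field_simp
  · -- the eigenvalue bound
    have hwR : ((w:ℕ):ℝ) = 2*(h:ℝ)+1 := by rw [hw]; push_cast; ring
    have hwpos : (0:ℝ) < ((w:ℕ):ℝ) := by rw [hwR]; positivity
    have hS2 : (∑ t ∈ Finset.Icc (-(h:ℤ)) (h:ℤ), ((t:ℝ))^2) * 3
        = (h:ℝ)*((h:ℝ)+1)*(2*(h:ℝ)+1) := by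
      have := sumSq h
      exact_mod_cast congrArg (fun z : ℤ => (z:ℝ)) this
    have hcard : (Finset.Icc (-(h:ℤ)) (h:ℤ)).card = 2*h+1 := by
      rw [Int.card_Icc]; omega
    have h2 : ∑ t ∈ Finset.Icc (-(h:ℤ)) (h:ℤ), ((1:ℝ) - (2*π*(t:ℝ)/(n:ℝ))^2/2)
        ≤ ∑ t ∈ Finset.Icc (-(h:ℤ)) (h:ℤ), Real.cos (2 * π * (t:ℝ) / (n:ℝ)) :=
      Finset.sum_le_sum (fun t _ => Real.one_sub_sq_div_two_le_cos)
    have h3 : ∑ t ∈ Finset.Icc (-(h:ℤ)) (h:ℤ), ((1:ℝ) - (2*π*(t:ℝ)/(n:ℝ))^2/2)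
        = (2*(h:ℝ)+1) - (2*π^2/(n:ℝ)^2) * ∑ t ∈ Finset.Icc (-(h:ℤ)) (h:ℤ), ((t:ℝ))^2 := by
      rw [Finset.sum_sub_distrib, Finset.sum_const, hcard]
      have hterm : ∀ t ∈ Finset.Icc (-(h:ℤ)) (h:ℤ),
          (2*π*(t:ℝ)/(n:ℝ))^2/2 = (2*π^2/(n:ℝ)^2) * ((t:ℝ))^2 := by
        intro t _; field_simp
      rw [Finset.sum_congr rfl hterm, ← Finset.mul_sum]
      ring
    rw [h3] at h2
    have step : 1 - 2 * π ^ 2 / 3 * (h:ℝ) * ((h:ℝ) + 1) / (n:ℝ) ^ 2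
        = (1/((w:ℕ):ℝ)) * ((2*(h:ℝ)+1) - (2*π^2/(n:ℝ)^2)
            * ∑ t ∈ Finset.Icc (-(h:ℤ)) (h:ℤ), ((t:ℝ))^2) := by
      have hSe : (∑ t ∈ Finset.Icc (-(h:ℤ)) (h:ℤ), ((t:ℝ))^2)
          = (h:ℝ)*((h:ℝ)+1)*(2*(h:ℝ)+1)/3 := by linarith
      rw [hSe, hwR]
      have hd : (2*(h:ℝ)+1) ≠ 0 := by positivity
      field_simp
    rw [hlam, ge_iff_le, step]
    apply mul_le_mul_of_nonneg_left h2 (by positivity)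
end
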